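/- arXiv:1610.02611 — 2 statements merged into one kernel-verified Lean document; each statement's English description precedes it below -/
import Mathlib

section
/- Let x > 0 be real and let n ≥ m ≥ 1 be natural numbers. With a_k = Σ_{j=0}^k x^j, b_k = Σ_{j=1}^k j x^j, c_k = Σ_{j=1}^k j² x^j, the quantities r₁ = (a_n + a_m) c_n − b_n² and r₂ = (a_n + a_m) c_m − b_m² satisfy r₁ r₂ ≥ (b_n b_m)². -/
open Finset

/-- `aP k x = ∑_{j=0}^k x^j` -/
noncomputable def aP (k : ℕ) (x : ℝ) : ℝ := ∑ j ∈ range (k + 1), x ^ j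

/-- `bP k x = ∑_{j=1}^k j x^j` -/
noncomputable def bP (k : ℕ) (x : ℝ) : ℝ := ∑ j ∈ range (k + 1), (j : ℝ) * x ^ j

/-- `cP k x = ∑_{j=1}^k j² x^j` -/
noncomputable def cP (k : ℕ) (x : ℝ) : ℝ := ∑ j ∈ range (k + 1), (j : ℝ) ^ 2 * x ^ j

/-! By Cauchy–Schwarz for the weights `x^j`, `b_k² ≤ a_k c_k`. Hence
`r₁ ≥ a_m c_n ≥ 0` and `r₂ ≥ a_n c_m ≥ 0`, so
`r₁ r₂ ≥ (a_n c_n)(a_m c_m) ≥ b_n² b_m²`. -/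

lemma sq_mul_le_of_sq_le_mul {R : Type*} [CommRing R] [LinearOrder R] [IsStrictOrderedRing R]
    {a a' b b' c c' : R} (ha : 0 ≤ a) (ha' : 0 ≤ a') (hc : 0 ≤ c) (hc' : 0 ≤ c')
    (h : b ^ 2 ≤ a * c) (h' : b' ^ 2 ≤ a' * c') :
    (b * b') ^ 2 ≤ ((a + a') * c - b ^ 2) * ((a + a') * c' - b' ^ 2) := by
  have hr : a' * c ≤ (a + a') * c - b ^ 2 := by linarith
  have hr' : a * c' ≤ (a + a') * c' - b' ^ 2 := by linarith
  calc (b * b') ^ 2 = b ^ 2 * b' ^ 2 := mul_pow b b' 2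
    _ ≤ (a * c) * (a' * c') := mul_le_mul h h' (sq_nonneg b') (by positivity)
    _ = (a' * c) * (a * c') := by ring
    _ ≤ _ := mul_le_mul hr hr' (by positivity) ((mul_nonneg ha' hc).trans hr)

lemma aP_nonneg (k : ℕ) {x : ℝ} (hx : 0 ≤ x) : 0 ≤ aP k x :=
  sum_nonneg fun j _ => pow_nonneg hx j

lemma cP_nonneg (k : ℕ) {x : ℝ} (hx : 0 ≤ x) : 0 ≤ cP k x :=
  sum_nonneg fun j _ => by positivity

lemma bP_sq_le_aP_mul_cP (k : ℕ) {x : ℝ} (hx : 0 ≤ x) : bP k x ^ 2 ≤ aP k x * cP k x :=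
  sum_sq_le_sum_mul_sum_of_sq_le_mul _ (fun j _ => pow_nonneg hx j)
    (fun j _ => by positivity) (fun j _ => le_of_eq (by ring))

theorem r1_mul_r2_ge_r12_sq_general (x : ℝ) (hx : 0 < x) (n m : ℕ) :
    (bP n x * bP m x) ^ 2 ≤
      ((aP n x + aP m x) * cP n x - bP n x ^ 2) *
        ((aP n x + aP m x) * cP m x - bP m x ^ 2) :=
  sq_mul_le_of_sq_le_mul (aP_nonneg n hx.le) (aP_nonneg m hx.le) (cP_nonneg n hx.le)
    (cP_nonneg m hx.le) (bP_sq_le_aP_mul_cP n hx.le) (bP_sq_le_aP_mul_cP m hx.le)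

/-- `r₁ r₂ ≥ r₁₂²` for the naive model:
`((aₙ+aₘ)cₙ − bₙ²)((aₙ+aₘ)cₘ − bₘ²) ≥ (bₙbₘ)²`. -/
theorem r1_mul_r2_ge_r12_sq (x : ℝ) (hx : 0 < x) (n m : ℕ) (hm : 1 ≤ m) (hnm : m ≤ n) :
    (bP n x * bP m x) ^ 2 ≤
      ((aP n x + aP m x) * cP n x - bP n x ^ 2) *
        ((aP n x + aP m x) * cP m x - bP m x ^ 2) :=
  r1_mul_r2_ge_r12_sq_general x hx n m
end

section
/- Let x > 0 be real and let n ≥ m ≥ 1 be natural numbers. With b_k = Σ_{j=1}^k j x^j and c_k = Σ_{j=1}^k j² x^j, one has b_n c_m ≤ b_m c_n. -/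
open Finset

/-! Passing from `n` to `n + 1` adds `(n+1) x^(n+1)` to `bₙ` and `(n+1)` times as much to `cₙ`;
since every `j ≤ m ≤ n + 1`, termwise `cₘ ≤ (n+1) bₘ`, so the inequality survives the step. -/

lemma bP_succ (k : ℕ) (x : ℝ) : bP (k + 1) x = bP k x + (k + 1 : ℝ) * x ^ (k + 1) := by
  rw [bP, sum_range_succ]
  push_cast
  rfl

lemma cP_succ (k : ℕ) (x : ℝ) : cP (k + 1) x = cP k x + (k + 1 : ℝ) ^ 2 * x ^ (k + 1) := by
  rw [cP, sum_range_succ]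
  push_cast
  rfl

lemma cP_le_mul_bP {x : ℝ} (hx : 0 ≤ x) {m K : ℕ} (hmK : m ≤ K) :
    cP m x ≤ K * bP m x := by
  rw [cP, bP, mul_sum]
  refine sum_le_sum fun j hj => ?_
  have hjK : (j : ℝ) ≤ K := by
    exact_mod_cast (Nat.lt_succ_iff.mp (mem_range.mp hj)).trans hmK
  rw [sq, mul_assoc]
  gcongr

theorem bn_cm_le_bm_cn_general (x : ℝ) (hx : 0 < x) (n m : ℕ) (hnm : m ≤ n) :
    bP n x * cP m x ≤ bP m x * cP n x := by
  induction n, hnm using Nat.le_induction with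
  | base => exact le_rfl
  | succ n hmn ih =>
    have key : cP m x ≤ (n + 1 : ℝ) * bP m x := by
      exact_mod_cast cP_le_mul_bP hx.le (hmn.trans n.le_succ)
    have hw : 0 ≤ (n + 1 : ℝ) * x ^ (n + 1) := by positivity
    rw [bP_succ, cP_succ]
    calc (bP n x + (n + 1 : ℝ) * x ^ (n + 1)) * cP m x
        = bP n x * cP m x + (n + 1 : ℝ) * x ^ (n + 1) * cP m x := by ring
      _ ≤ bP m x * cP n x + (n + 1 : ℝ) * x ^ (n + 1) * ((n + 1 : ℝ) * bP m x) := by gcongr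
      _ = bP m x * (cP n x + (n + 1 : ℝ) ^ 2 * x ^ (n + 1)) := by ring

/-- For `x > 0` and `n ≥ m ≥ 1`, one has `bₙ cₘ ≤ bₘ cₙ`. -/
theorem bn_cm_le_bm_cn (x : ℝ) (hx : 0 < x) (n m : ℕ) (hm : 1 ≤ m) (hnm : m ≤ n) :
    bP n x * cP m x ≤ bP m x * cP n x :=
  bn_cm_le_bm_cn_general x hx n m hnm
end
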